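/- Let χ be a Dirichlet character (a complex-valued character modulo some positive integer, extended by zero), let v be a positive integer, and let s be any complex number. Then T_s^{χ}(v) = v^{2s−1} · T_{1−s}^{χ}(v). -/

import Mathlib

open scoped Real BigOperators

/-- The divisor power sum `σ_w(u) = Σ_{d ∣ u} d^w` with complex exponent `w`. -/
noncomputable def sigmaC (w : ℂ) (u : ℕ) : ℂ := ∑ d ∈ u.divisors, ((d : ℂ)) ^ w

/-- `T_s^χ(v) = Σ_{a ∣ v} μ(a) χ(a) a^(s-1) σ_{2s-1}(v/a)`. -/
noncomputable def TT (χ : ℕ → ℂ) (s : ℂ) (v : ℕ) : ℂ :=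
  ∑ a ∈ v.divisors,
    ((ArithmeticFunction.moebius a : ℤ) : ℂ) * χ a * ((a : ℂ)) ^ (s - 1) *
      sigmaC (2 * s - 1) (v / a)

/-!
Both sides are sums over `a ∣ v`, so it suffices to compare them termwise. Writing `v = a u`,
the symmetry `d ↦ u / d` of the divisors of `u` gives `σ_w(u) = u^w σ_{-w}(u)`, and the powers
of `a` and `u` then recombine as `a^(s-1) u^(2s-1) = v^(2s-1) a^(-s)`.
-/

lemma natCast_div_cpow {d u : ℕ} (hd : d ∣ u) (hd0 : d ≠ 0) (w : ℂ) :
    (((u / d : ℕ) : ℂ)) ^ w = (u : ℂ) ^ w * (d : ℂ) ^ (-w) := by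
  obtain ⟨e, rfl⟩ := hd
  have hd' : (d : ℂ) ^ w ≠ 0 := by simp [Complex.cpow_eq_zero_iff, hd0]
  rw [Nat.mul_div_cancel_left e (Nat.pos_of_ne_zero hd0), Nat.cast_mul,
    Complex.natCast_mul_natCast_cpow, Complex.cpow_neg, mul_comm ((d : ℂ) ^ w),
    mul_assoc, mul_inv_cancel₀ hd', mul_one]

lemma sigmaC_eq_cpow_mul_sigmaC_neg (w : ℂ) (u : ℕ) :
    sigmaC w u = (u : ℂ) ^ w * sigmaC (-w) u := by
  unfold sigmaC
  rw [← Nat.sum_div_divisors, Finset.mul_sum]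
  exact Finset.sum_congr rfl fun d hd =>
    natCast_div_cpow (Nat.dvd_of_mem_divisors hd) (Nat.pos_of_mem_divisors hd).ne' w

lemma natCast_cpow_mul_natCast_cpow_eq {a : ℕ} (ha : a ≠ 0) (u : ℕ) (s : ℂ) :
    (a : ℂ) ^ (s - 1) * (u : ℂ) ^ (2 * s - 1)
      = ((a * u : ℕ) : ℂ) ^ (2 * s - 1) * (a : ℂ) ^ (-s) := by
  have ha' : (a : ℂ) ≠ 0 := Nat.cast_ne_zero.mpr ha
  rw [Nat.cast_mul, Complex.natCast_mul_natCast_cpow, mul_right_comm, ← Complex.cpow_add _ _ ha']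
  ring_nf

theorem TT_eq_cpow_mul_TT_one_sub (χ : ℕ → ℂ) (s : ℂ) (v : ℕ) :
    TT χ s v = (v : ℂ) ^ (2 * s - 1) * TT χ (1 - s) v := by
  unfold TT
  rw [Finset.mul_sum]
  refine Finset.sum_congr rfl fun a ha => ?_
  have ha0 : a ≠ 0 := (Nat.pos_of_mem_divisors ha).ne'
  have hv : a * (v / a) = v := Nat.mul_div_cancel' (Nat.dvd_of_mem_divisors ha)
  have hexp : 2 * (1 - s) - 1 = -(2 * s - 1) := by ring
  rw [sigmaC_eq_cpow_mul_sigmaC_neg (2 * s - 1), hexp, show 1 - s - 1 = -s by ring]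
  calc ((ArithmeticFunction.moebius a : ℤ) : ℂ) * χ a * (a : ℂ) ^ (s - 1) *
        ((((v / a : ℕ) : ℂ)) ^ (2 * s - 1) * sigmaC (-(2 * s - 1)) (v / a))
      = ((ArithmeticFunction.moebius a : ℤ) : ℂ) * χ a *
          ((a : ℂ) ^ (s - 1) * (((v / a : ℕ) : ℂ)) ^ (2 * s - 1)) *
          sigmaC (-(2 * s - 1)) (v / a) := by ring
    _ = _ := by rw [natCast_cpow_mul_natCast_cpow_eq ha0, hv]; ring

theorem TT_functional_equation_general (N : ℕ) (χ : DirichletCharacter ℂ N)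
    (v : ℕ) (s : ℂ) :
    TT (fun a => χ ((a : ℕ) : ZMod N)) s v
      = ((v : ℂ)) ^ (2 * s - 1) * TT (fun a => χ ((a : ℕ) : ZMod N)) (1 - s) v :=
  TT_eq_cpow_mul_TT_one_sub _ s v

/-- the functional equation `T_s^χ(v) = v^(2s-1) T_{1-s}^χ(v)` for any
Dirichlet character `χ` (mod `N`, extended by zero), positive integer `v`, and `s ∈ ℂ`. -/
theorem TT_functional_equation (N : ℕ) (hN : 0 < N) (χ : DirichletCharacter ℂ N)
    (v : ℕ) (hv : 0 < v) (s : ℂ) :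
    TT (fun a => χ ((a : ℕ) : ZMod N)) s v
      = ((v : ℂ)) ^ (2 * s - 1) * TT (fun a => χ ((a : ℕ) : ZMod N)) (1 - s) v :=
  TT_functional_equation_general N χ v s
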